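/- Fix t > 0 and x ∈ ℝ. Let c be continuous on [0,∞)×ℝ with lower bound m ∈ ℝ, having at each point of (0,∞)×ℝ an x-derivative c_x which extends to a continuous bounded function on [0,∞)×ℝ. For an integer n ≥ 1 and a continuous function w : [0,1] → ℝ with w(0) = 0, let H_n(w) = exp(−(t/n) ∑_{j=0}^{n−1} c((n−j)t/n, (n sinh(2t/n))^{1/2} w(j/n) + x/cosh(2t/n)^{j})). Then for every such w one has 0 ≤ H_n(w) ≤ e^{−mt} and lim_{n→∞} H_n(w) = exp(−t ∫₀¹ c(t(1−s), √(2t) w(s) + x) ds). -/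

import Mathlib

/-!
Write `H_n = exp (-t P_n)`, where `P_n` averages `c` over the sample points
`((n - j) t / n, √(n sinh (2t/n)) w(j/n) + x / cosh (2t/n)^j)`, `j < n`. Since
`n sinh (2t/n) → 2t` and `1 ≤ cosh (2t/n)^j ≤ exp (2t²/n)` for `j ≤ n`, these points
approach `(t (1 - j/n), √(2t) w(j/n) + x)` uniformly in `j`; uniform continuity of `c` on a
compact neighbourhood of this curve reduces `P_n` to a Riemann sum of the continuous function
`s ↦ c (t (1 - s)) (√(2t) w s + x)` on `[0,1]`.
-/

open MeasureTheory Real Filter Topology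

/-- Convergence along this filter is convergence as `n → ∞`, uniformly in `j < n`. -/
def lowerTriangleAtTop : Filter (ℕ × ℕ) := comap Prod.fst atTop ⊓ 𝓟 {p | p.2 < p.1}

theorem eventually_lowerTriangleAtTop {P : ℕ × ℕ → Prop} :
    (∀ᶠ p in lowerTriangleAtTop, P p) ↔ ∀ᶠ n in atTop, ∀ j < n, P (n, j) := by
  simp only [lowerTriangleAtTop, eventually_inf_principal, eventually_comap, Set.mem_ofPred_eq]
  refine eventually_congr (Eventually.of_forall fun n => ?_)
  exact ⟨fun h j hj => h _ rfl hj,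
    fun h ⟨n', j⟩ hp hj => by obtain rfl : n' = n := hp; exact h j hj⟩

theorem tendsto_fst_lowerTriangleAtTop : Tendsto Prod.fst lowerTriangleAtTop atTop :=
  tendsto_comap.mono_left inf_le_left

theorem tendsto_sum_range_div_of_lowerTriangleAtTop {a : ℕ → ℕ → ℝ} {L : ℝ}
    (ha : Tendsto (fun p : ℕ × ℕ => a p.1 p.2) lowerTriangleAtTop (𝓝 L)) :
    Tendsto (fun n : ℕ => (∑ j ∈ Finset.range n, a n j) / n) atTop (𝓝 L) := by
  rw [Metric.tendsto_nhds] at ha ⊢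
  intro ε hε
  filter_upwards [eventually_lowerTriangleAtTop.1 (ha (ε / 2) (half_pos hε)),
    eventually_ge_atTop 1] with n hn hn1
  have hn0 : (0 : ℝ) < n := by exact_mod_cast hn1
  have hsum : |∑ j ∈ Finset.range n, (a n j - L)| ≤ n * (ε / 2) := by
    refine (Finset.abs_sum_le_sum_abs _ _).trans ?_
    simpa [Real.dist_eq] using
      Finset.sum_le_card_nsmul _ _ _ fun j hj => (hn j (Finset.mem_range.1 hj)).le
  calc dist ((∑ j ∈ Finset.range n, a n j) / n) L
      = |∑ j ∈ Finset.range n, (a n j - L)| / n := by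
        rw [Real.dist_eq, Finset.sum_sub_distrib, Finset.sum_const, Finset.card_range,
          nsmul_eq_mul, ← abs_of_pos hn0, ← abs_div, abs_of_pos hn0, sub_div,
          mul_div_cancel_left₀ _ hn0.ne']
    _ ≤ ε / 2 := by rw [div_le_iff₀ hn0]; linarith
    _ < ε := half_lt_self hε

theorem abs_sub_inv_mul_integral_le {g : ℝ → ℝ} {a b ε : ℝ} (hab : a < b)
    (hg : IntervalIntegrable g volume a b) (hε : ∀ s ∈ Set.Ioc a b, |g a - g s| ≤ ε) :
    |g a - (b - a)⁻¹ * ∫ s in a..b, g s| ≤ ε := by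
  have hba : 0 < b - a := sub_pos.2 hab
  have hint : ‖∫ s in a..b, (g a - g s)‖ ≤ ε * |b - a| :=
    intervalIntegral.norm_integral_le_of_norm_le_const fun s hs =>
      hε s (Set.uIoc_of_le hab.le ▸ hs)
  rw [intervalIntegral.integral_sub intervalIntegrable_const hg, intervalIntegral.integral_const,
    smul_eq_mul, Real.norm_eq_abs, abs_of_pos hba] at hint
  have heq : g a - (b - a)⁻¹ * ∫ s in a..b, g s
      = (b - a)⁻¹ * ((b - a) * g a - ∫ s in a..b, g s) := by
    field_simp
  rw [heq, abs_mul, abs_inv, abs_of_pos hba, inv_mul_le_iff₀ hba]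
  linarith

theorem Icc_div_subset_Icc {n j : ℕ} (hj : j < n) :
    Set.Icc ((j : ℝ) / n) ((j + 1) / n) ⊆ Set.Icc 0 1 := by
  have hn : (0 : ℝ) < n := by exact_mod_cast (Nat.zero_le j).trans_lt hj
  refine Set.Icc_subset_Icc (by positivity) ((div_le_one hn).2 ?_)
  exact_mod_cast hj

theorem natCast_div_mem_Icc {n j : ℕ} (hj : j < n) : (j : ℝ) / n ∈ Set.Icc 0 1 :=
  Icc_div_subset_Icc hj ⟨le_rfl, by gcongr; linarith⟩

theorem tendsto_sum_range_div_integral {g : ℝ → ℝ} (hg : ContinuousOn g (Set.Icc 0 1)) :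
    Tendsto (fun n : ℕ => (∑ j ∈ Finset.range n, g (j / n)) / n) atTop
      (𝓝 (∫ s in (0 : ℝ)..1, g s)) := by
  have hint : ∀ n j : ℕ, j < n → IntervalIntegrable g volume (j / n) ((j + 1) / n) := by
    intro n j hj
    refine (hg.mono ?_).intervalIntegrable
    rw [Set.uIcc_of_le (by gcongr; linarith)]
    exact Icc_div_subset_Icc hj
  have hsplit : ∀ n : ℕ, n ≠ 0 →
      ∑ j ∈ Finset.range n, ∫ s in (j / n : ℝ)..((j + 1) / n), g s
        = ∫ s in (0 : ℝ)..1, g s := by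
    intro n hn
    have := intervalIntegral.sum_integral_adjacent_intervals (a := fun j : ℕ => (j / n : ℝ))
      fun j hj => by simpa using hint n j hj
    simpa [div_self ((Nat.cast_ne_zero (R := ℝ)).2 hn)] using this
  have hlocal : Tendsto (fun p : ℕ × ℕ => g (p.2 / p.1) -
      p.1 * ∫ s in (p.2 / p.1 : ℝ)..((p.2 + 1) / p.1), g s) lowerTriangleAtTop (𝓝 0) := by
    have huc := Metric.uniformContinuousOn_iff.1
      (isCompact_Icc.uniformContinuousOn_of_continuous hg)
    rw [Metric.tendsto_nhds]
    intro ε hε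
    obtain ⟨δ, hδ, hgδ⟩ := huc (ε / 2) (half_pos hε)
    refine eventually_lowerTriangleAtTop.2 ?_
    filter_upwards [tendsto_one_div_atTop_nhds_zero_nat.eventually_lt_const hδ]
      with n hn j hj
    have hn0 : (0 : ℝ) < n := by exact_mod_cast (Nat.zero_le j).trans_lt hj
    have hstep : ((j : ℝ) + 1) / n - j / n = 1 / n := by ring
    have hlt : (j : ℝ) / n < (j + 1) / n := by gcongr; linarith
    have := abs_sub_inv_mul_integral_le hlt (hint n j hj) fun s hs => by
      have hsI := Icc_div_subset_Icc hj (Set.Ioc_subset_Icc_self hs)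
      refine (hgδ _ (Icc_div_subset_Icc hj ⟨le_rfl, hlt.le⟩) _ hsI ?_).le
      rw [Real.dist_eq, abs_sub_comm, abs_of_pos (sub_pos.2 hs.1)]
      linarith [hs.2]
    rw [hstep, one_div, inv_inv] at this
    rw [Real.dist_0_eq_abs]
    linarith
  refine tendsto_sub_nhds_zero_iff.1 ((tendsto_sum_range_div_of_lowerTriangleAtTop
    (a := fun n j => g (j / n) - n * ∫ s in (j / n : ℝ)..((j + 1) / n), g s) hlocal).congr'
    ((eventually_ne_atTop 0).mono fun n hn => ?_))
  rw [Finset.sum_sub_distrib, ← Finset.mul_sum, hsplit n hn, sub_div,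
    mul_div_cancel_left₀ _ (Nat.cast_ne_zero.2 hn)]

theorem tendsto_dist_comp_of_tendsto_dist {X Y ι : Type*} [MetricSpace X] [ProperSpace X]
    [PseudoMetricSpace Y] {f : X → Y} {S L : Set X} (hS : IsClosed S) (hL : IsCompact L)
    (hf : ContinuousOn f S) {l : Filter ι} {p q : ι → X} (hp : ∀ᶠ i in l, p i ∈ S)
    (hq : ∀ᶠ i in l, q i ∈ L ∩ S) (hpq : Tendsto (fun i => dist (p i) (q i)) l (𝓝 0)) :
    Tendsto (fun i => dist (f (p i)) (f (q i))) l (𝓝 0) := by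
  -- once `dist (p i) (q i) ≤ 1`, both points lie in this compact set, on which `f` is
  -- uniformly continuous
  have hK : IsCompact (Metric.cthickening 1 L ∩ S) := hL.cthickening.inter_right hS
  have huc := Metric.uniformContinuousOn_iff.1
    (hK.uniformContinuousOn_of_continuous (hf.mono Set.inter_subset_right))
  rw [Metric.tendsto_nhds] at hpq ⊢
  intro ε hε
  obtain ⟨δ, hδ, hfδ⟩ := huc ε hε
  filter_upwards [hp, hq, hpq (min δ 1) (lt_min hδ one_pos)] with i hpi hqi hi
  rw [Real.dist_0_eq_abs, abs_of_nonneg dist_nonneg] at hi ⊢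
  refine hfδ _ ⟨?_, hpi⟩ _ ⟨Metric.self_subset_cthickening _ hqi.1, hqi.2⟩
    (hi.trans_le (min_le_left _ _))
  exact Metric.mem_cthickening_of_dist_le _ _ _ _ hqi.1 (hi.le.trans (min_le_right _ _))

theorem tendsto_nat_mul_sinh_div (a : ℝ) :
    Tendsto (fun n : ℕ => n * sinh (a / n)) atTop (𝓝 a) := by
  rcases eq_or_ne a 0 with rfl | ha
  · simp
  have hu : Tendsto (fun n : ℕ => a / n) atTop (𝓝[≠] 0) :=
    tendsto_nhdsWithin_iff.2 ⟨tendsto_const_div_atTop_nhds_zero_nat a,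
      (eventually_ne_atTop 0).mono fun n hn => div_ne_zero ha (Nat.cast_ne_zero.2 hn)⟩
  have hslope := ((hasDerivAt_sinh 0).tendsto_slope_zero.comp hu).const_mul a
  rw [cosh_zero, mul_one] at hslope
  refine hslope.congr' ((eventually_ne_atTop 0).mono fun n hn => ?_)
  have : (n : ℝ) ≠ 0 := Nat.cast_ne_zero.2 hn
  simp only [Function.comp_apply, zero_add, sinh_zero, sub_zero, smul_eq_mul]
  field_simp

theorem cosh_pow_le_exp (u : ℝ) (n : ℕ) : cosh u ^ n ≤ exp (n * u ^ 2 / 2) := by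
  rw [mul_div_assoc, exp_nat_mul]
  exact pow_le_pow_left₀ (cosh_pos u).le (cosh_le_exp_half_sq u) n

theorem tendsto_cosh_div_pow_lowerTriangleAtTop (u : ℝ) :
    Tendsto (fun p : ℕ × ℕ => cosh (u / p.1) ^ p.2) lowerTriangleAtTop (𝓝 1) := by
  have hexp : Tendsto (fun n : ℕ => exp (u ^ 2 / 2 / n)) atTop (𝓝 1) := by
    simpa [Function.comp_def] using
      (continuous_exp.tendsto 0).comp (tendsto_const_div_atTop_nhds_zero_nat _)
  refine tendsto_of_tendsto_of_tendsto_of_le_of_le' tendsto_const_nhds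
    (hexp.comp tendsto_fst_lowerTriangleAtTop)
    (Eventually.of_forall fun p => one_le_pow₀ (one_le_cosh _)) ?_
  refine eventually_lowerTriangleAtTop.2 ((eventually_ne_atTop 0).mono fun n hn j hj => ?_)
  have : (n : ℝ) ≠ 0 := Nat.cast_ne_zero.2 hn
  calc cosh (u / n) ^ j ≤ cosh (u / n) ^ n := pow_le_pow_right₀ (one_le_cosh _) hj.le
    _ ≤ exp (n * (u / n) ^ 2 / 2) := cosh_pow_le_exp _ _
    _ = exp (u ^ 2 / 2 / n) := by congr 1; field_simp

theorem tendsto_sum_range_div_integral_of_tendsto_dist {X : Type*} [MetricSpace X]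
    [ProperSpace X] {f : X → ℝ} {S : Set X} (hS : IsClosed S) (hf : ContinuousOn f S)
    {F : ℝ → X} (hF : ContinuousOn F (Set.Icc 0 1)) (hFS : Set.MapsTo F (Set.Icc 0 1) S)
    {p : ℕ × ℕ → X} (hp : ∀ᶠ q in lowerTriangleAtTop, p q ∈ S)
    (hpF : Tendsto (fun q : ℕ × ℕ => dist (p q) (F (q.2 / q.1))) lowerTriangleAtTop (𝓝 0)) :
    Tendsto (fun n : ℕ => (∑ j ∈ Finset.range n, f (p (n, j))) / n) atTop
      (𝓝 (∫ s in (0 : ℝ)..1, f (F s))) := by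
  have hFq : ∀ᶠ q in lowerTriangleAtTop, F (q.2 / q.1) ∈ F '' Set.Icc 0 1 ∩ S :=
    eventually_lowerTriangleAtTop.2 (Eventually.of_forall fun n j hj =>
      ⟨Set.mem_image_of_mem F (natCast_div_mem_Icc hj), hFS (natCast_div_mem_Icc hj)⟩)
  have hdist := tendsto_dist_comp_of_tendsto_dist hS (isCompact_Icc.image_of_continuousOn hF) hf
    hp hFq hpF
  have hdiff := tendsto_sum_range_div_of_lowerTriangleAtTop
    (a := fun n j => f (p (n, j)) - f (F (j / n))) (L := 0)
    (tendsto_iff_dist_tendsto_zero.2 (by simpa [Real.dist_eq] using hdist))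
  have hsum := hdiff.add (tendsto_sum_range_div_integral (hf.comp hF hFS))
  rw [zero_add] at hsum
  refine hsum.congr fun n => ?_
  simp only [Function.comp_apply, Finset.sum_sub_distrib]
  ring

theorem tendsto_sample_time_sub (t : ℝ) :
    Tendsto (fun q : ℕ × ℕ => ((q.1 : ℝ) - q.2) * t / q.1 - t * (1 - q.2 / q.1))
      lowerTriangleAtTop (𝓝 0) := by
  refine tendsto_const_nhds.congr' (eventually_lowerTriangleAtTop.2
    (Eventually.of_forall fun n j hj => ?_))
  have : (n : ℝ) ≠ 0 := by exact_mod_cast ((Nat.zero_le j).trans_lt hj).ne'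
  field_simp
  ring

theorem tendsto_sample_space_sub (t x : ℝ) {w : ℝ → ℝ} {W : ℝ}
    (hW : ∀ s ∈ Set.Icc (0 : ℝ) 1, ‖w s‖ ≤ W) :
    Tendsto (fun q : ℕ × ℕ => sqrt (q.1 * sinh (2 * t / q.1)) * w (q.2 / q.1) +
        x / cosh (2 * t / q.1) ^ q.2 - (sqrt (2 * t) * w (q.2 / q.1) + x))
      lowerTriangleAtTop (𝓝 0) := by
  have hsqrt : Tendsto (fun q : ℕ × ℕ => sqrt (q.1 * sinh (2 * t / q.1)) - sqrt (2 * t))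
      lowerTriangleAtTop (𝓝 0) := by
    simpa using (((tendsto_nat_mul_sinh_div (2 * t)).sqrt).comp
      tendsto_fst_lowerTriangleAtTop).sub_const (sqrt (2 * t))
  have hw : IsBoundedUnder (· ≤ ·) lowerTriangleAtTop
      (fun q : ℕ × ℕ => ‖w (q.2 / q.1)‖) :=
    isBoundedUnder_of_eventually_le (a := W) (eventually_lowerTriangleAtTop.2
      (Eventually.of_forall fun _ _ hj => hW _ (natCast_div_mem_Icc hj)))
  have hcosh : Tendsto (fun q : ℕ × ℕ => x / cosh (2 * t / q.1) ^ q.2 - x)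
      lowerTriangleAtTop (𝓝 0) := by
    simpa using ((tendsto_const_nhds (x := x)).div
      (tendsto_cosh_div_pow_lowerTriangleAtTop (2 * t)) one_ne_zero).sub_const x
  have hsum := (hsqrt.zero_mul_isBoundedUnder_le hw).add hcosh
  rw [add_zero] at hsum
  exact hsum.congr fun q => by ring

theorem neg_div_mul_sum_le {t m : ℝ} (ht : 0 ≤ t) {n : ℕ} (hn : 1 ≤ n) {a : ℕ → ℝ}
    (ha : ∀ j < n, m ≤ a j) : -(t / n) * ∑ j ∈ Finset.range n, a j ≤ -(m * t) := by
  have hn0 : (0 : ℝ) < n := by exact_mod_cast hn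
  have hsum : n * m ≤ ∑ j ∈ Finset.range n, a j := by
    simpa using Finset.card_nsmul_le_sum _ _ m fun j hj => ha j (Finset.mem_range.1 hj)
  calc -(t / n) * ∑ j ∈ Finset.range n, a j ≤ -(t / n) * (n * m) :=
        mul_le_mul_of_nonpos_left hsum (neg_nonpos.2 (by positivity))
    _ = -(m * t) := by field_simp

theorem Hn_bounds_and_tendsto_general
    (t : ℝ) (ht : 0 < t) (x : ℝ)
    (c : ℝ → ℝ → ℝ)
    (hc_cont : ContinuousOn (fun p : ℝ × ℝ => c p.1 p.2) (Set.Ici 0 ×ˢ Set.univ))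
    (m : ℝ) (hm : ∀ s ∈ Set.Ici (0:ℝ), ∀ y : ℝ, m ≤ c s y)
    (w : ℝ → ℝ) (hw : ContinuousOn w (Set.Icc 0 1)) :
    let H : ℕ → ℝ := fun n => Real.exp (-(t / n) *
      ∑ j ∈ Finset.range n,
        c (((n : ℝ) - j) * t / n)
          (Real.sqrt ((n : ℝ) * Real.sinh (2 * t / n)) * w ((j : ℝ) / n) +
            x / Real.cosh (2 * t / n) ^ j))
    (∀ n : ℕ, 1 ≤ n → 0 ≤ H n ∧ H n ≤ Real.exp (-(m * t))) ∧
      Tendsto H atTop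
        (𝓝 (Real.exp (-(t * ∫ s in (0:ℝ)..1,
          c (t * (1 - s)) (Real.sqrt (2 * t) * w s + x))))) := by
  intro H
  have htime : ∀ n j : ℕ, j < n → (0 : ℝ) ≤ ((n : ℝ) - j) * t / n := fun n j hj => by
    have : (j : ℝ) < n := by exact_mod_cast hj
    positivity
  refine ⟨fun n hn => ⟨exp_nonneg _, exp_le_exp.2 (neg_div_mul_sum_le ht.le hn
    fun j hj => hm _ (htime n j hj) _)⟩, ?_⟩
  obtain ⟨W, hW⟩ := isCompact_Icc.exists_bound_of_continuousOn hw
  have hP := tendsto_sum_range_div_integral_of_tendsto_dist (isClosed_Ici.prod isClosed_univ)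
    hc_cont (F := fun s => (t * (1 - s), sqrt (2 * t) * w s + x))
    ((continuous_const.mul (continuous_const.sub continuous_id)).continuousOn.prodMk
      ((continuousOn_const.mul hw).add continuousOn_const))
    (fun s hs => ⟨mul_nonneg ht.le (sub_nonneg.2 hs.2), trivial⟩)
    (p := fun q => (((q.1 : ℝ) - q.2) * t / q.1,
      sqrt (q.1 * sinh (2 * t / q.1)) * w (q.2 / q.1) + x / cosh (2 * t / q.1) ^ q.2))
    (eventually_lowerTriangleAtTop.2 (Eventually.of_forall fun n j hj =>
      ⟨htime n j hj, trivial⟩))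
    (by simpa [Prod.dist_eq, Real.dist_eq] using
      ((tendsto_sample_time_sub t).prodMk_nhds (tendsto_sample_space_sub t x hW)).norm)
  refine ((continuous_exp.tendsto _).comp (hP.const_mul t).neg).congr fun n => ?_
  simp only [Function.comp_apply, H]
  congr 1
  ring

/-- **Lemma (convergence of `H_n`).** For `t > 0`, `x ∈ ℝ`, a potential `c` continuous on
`[0,∞)×ℝ` bounded below by `m`, whose `x`-derivative extends to a continuous bounded
function on `[0,∞)×ℝ`, and `w` continuous on `[0,1]` with `w(0) = 0`, the factor
`H_n(w) = exp(−(t/n) ∑_{j=0}^{n−1} c((n−j)t/n, √(n sinh(2t/n)) w(j/n) + x/cosh(2t/n)^j))`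
satisfies `0 ≤ H_n(w) ≤ e^{−mt}` and
`H_n(w) → exp(−t ∫₀¹ c(t(1−s), √(2t) w(s) + x) ds)` as `n → ∞`. -/
theorem Hn_bounds_and_tendsto
    (t : ℝ) (ht : 0 < t) (x : ℝ)
    (c : ℝ → ℝ → ℝ)
    (hc_cont : ContinuousOn (fun p : ℝ × ℝ => c p.1 p.2) (Set.Ici 0 ×ˢ Set.univ))
    (m : ℝ) (hm : ∀ s ∈ Set.Ici (0:ℝ), ∀ y : ℝ, m ≤ c s y)
    (cx : ℝ → ℝ → ℝ)
    (hcx_deriv : ∀ s > (0:ℝ), ∀ y : ℝ, HasDerivAt (fun z => c s z) (cx s y) y)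
    (hcx_cont : ContinuousOn (fun p : ℝ × ℝ => cx p.1 p.2) (Set.Ici 0 ×ˢ Set.univ))
    (hcx_bdd : ∃ M : ℝ, ∀ s ∈ Set.Ici (0:ℝ), ∀ y : ℝ, |cx s y| ≤ M)
    (w : ℝ → ℝ) (hw : ContinuousOn w (Set.Icc 0 1)) (hw0 : w 0 = 0) :
    let H : ℕ → ℝ := fun n => Real.exp (-(t / n) *
      ∑ j ∈ Finset.range n,
        c (((n : ℝ) - j) * t / n)
          (Real.sqrt ((n : ℝ) * Real.sinh (2 * t / n)) * w ((j : ℝ) / n) +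
            x / Real.cosh (2 * t / n) ^ j))
    (∀ n : ℕ, 1 ≤ n → 0 ≤ H n ∧ H n ≤ Real.exp (-(m * t))) ∧
      Tendsto H atTop
        (𝓝 (Real.exp (-(t * ∫ s in (0:ℝ)..1,
          c (t * (1 - s)) (Real.sqrt (2 * t) * w s + x))))) :=
  Hn_bounds_and_tendsto_general t ht x c hc_cont m hm w hw
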